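/- arXiv:2501.13323 — 3 statements merged into one kernel-verified Lean document; each statement's English description precedes it below -/
import Mathlib

section
/- Let n be a positive integer, μ ≥ 1 a real number with μ²/n < 1, and let y, v ∈ ℝ^n with y ≠ 0. Suppose that (i) ‖y‖₂²/(n(1+μ²/n)) ≥ 2(1+μ²/n)·log 2 / (μ(2+μ²/n)) and (ii) (vᵀy/‖y‖₂²)·n·√(1+μ²/n) ≥ −μ(2+μ²/n)/4. Then exp( μ²(2+μ²/n)/(2n(1+μ²/n)²)·‖y‖₂² + μ/(1+μ²/n)^{3/2}·vᵀy − μ²/(2(1+μ²/n))·‖v‖₂² ) + exp( −μ²(2+3μ²/n)/(2n(1+μ²/n)²)·‖y‖₂² − μ(1+2μ²/n)/(1+μ²/n)^{3/2}·vᵀy − μ²/(2(1+μ²/n))·‖v‖₂² ) ≥ exp( μ/(1+μ²/n)^{3/2}·vᵀy − μ²/(2(1+μ²/n))·‖v‖₂² ) + exp( −μ/(1+μ²/n)^{3/2}·vᵀy − μ²/(2(1+μ²/n))·‖v‖₂² ). -/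
open Real


lemma key_exp (A B A' B' : ℝ) (hA : Real.log 2 ≤ A) (hd : 0 ≤ A + 2*B)
    (hd' : A' + (B' + B) ≤ 2*(A + 2*B)) :
    Real.exp B + Real.exp (-B) ≤ Real.exp (A + B) + Real.exp (-A' - B') := by
  set x := Real.exp B with hx
  set Y := Real.exp (-B) with hY
  set z := Real.exp (A + 2*B) with hz
  set w := Real.exp (-A' - B') with hw
  have hxpos : 0 < x := Real.exp_pos _
  have hypos : 0 < Y := Real.exp_pos _
  have hzpos : 0 < z := Real.exp_pos _
  have hwpos : 0 < w := Real.exp_pos _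
  have hxy : x * Y = 1 := by rw [hx, hY, ← Real.exp_add]; simp
  have hz1 : 1 ≤ z := by rw [hz]; exact Real.one_le_exp hd
  have h2A : (2:ℝ) ≤ z * Y^2 := by
    have : z * Y^2 = Real.exp A := by
      rw [hz, hY, pow_two, ← Real.exp_add, ← Real.exp_add]; ring_nf
    rw [this, ← Real.exp_log (by norm_num : (0:ℝ) < 2)]
    exact Real.exp_le_exp.mpr hA
  have hwz : x ≤ w * z^2 := by
    have : w * z^2 = Real.exp (-A' - B' + 2*(A+2*B)) := by
      rw [hw, hz, pow_two, ← Real.exp_add, ← Real.exp_add]; ring_nf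
    rw [hx, this]
    apply Real.exp_le_exp.mpr; linarith
  have hexpAB : Real.exp (A + B) = z * Y := by
    rw [hz, hY, ← Real.exp_add]; ring_nf
  rw [hexpAB]
  have h2 : x*(z+1) ≤ z^2*Y := by nlinarith [mul_le_mul_of_nonneg_left h2A hxpos.le]
  have h4 : 0 ≤ (z-1)*(z^2*Y - x*(z+1)) := mul_nonneg (by linarith) (by linarith)
  nlinarith [h4, hwz, mul_pos hzpos hzpos]

/-- **Lemma 11 (deterministic inequality).** Suppose `μ ≥ 1`, `μ²/n < 1`, `y ≠ 0`, and
(i) `‖y‖₂²/(n(1+μ²/n)) ≥ 2(1+μ²/n)log 2/(μ(2+μ²/n))`,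
(ii) `(vᵀy/‖y‖₂²)·n·√(1+μ²/n) ≥ −μ(2+μ²/n)/4`. Then
`exp(μ²(2+μ²/n)/(2n(1+μ²/n)²)·‖y‖₂² + μ/(1+μ²/n)^{3/2}·vᵀy − μ²/(2(1+μ²/n))·‖v‖₂²)
 + exp(−μ²(2+3μ²/n)/(2n(1+μ²/n)²)·‖y‖₂² − μ(1+2μ²/n)/(1+μ²/n)^{3/2}·vᵀy − μ²/(2(1+μ²/n))·‖v‖₂²)
 ≥ exp(μ/(1+μ²/n)^{3/2}·vᵀy − μ²/(2(1+μ²/n))·‖v‖₂²)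
 + exp(−μ/(1+μ²/n)^{3/2}·vᵀy − μ²/(2(1+μ²/n))·‖v‖₂²)`. -/
theorem truncation_event_inequality (n : ℕ) (μ : ℝ) (y v : Fin n → ℝ)
    (hμ : 1 ≤ μ) (hμn : μ ^ 2 / n < 1) (hy : y ≠ 0)
    (h1 : 2 * (1 + μ ^ 2 / n) * Real.log 2 / (μ * (2 + μ ^ 2 / n)) ≤
      (∑ i, y i ^ 2) / (n * (1 + μ ^ 2 / n)))
    (h2 : -(μ * (2 + μ ^ 2 / n)) / 4 ≤
      ((∑ i, v i * y i) / (∑ i, y i ^ 2)) * n * Real.sqrt (1 + μ ^ 2 / n)) :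
    Real.exp (μ / (1 + μ ^ 2 / n) ^ ((3 : ℝ) / 2) * (∑ i, v i * y i) -
        μ ^ 2 / (2 * (1 + μ ^ 2 / n)) * (∑ i, v i ^ 2)) +
      Real.exp (-(μ / (1 + μ ^ 2 / n) ^ ((3 : ℝ) / 2)) * (∑ i, v i * y i) -
        μ ^ 2 / (2 * (1 + μ ^ 2 / n)) * (∑ i, v i ^ 2)) ≤
    Real.exp (μ ^ 2 * (2 + μ ^ 2 / n) / (2 * n * (1 + μ ^ 2 / n) ^ 2) * (∑ i, y i ^ 2) +
        μ / (1 + μ ^ 2 / n) ^ ((3 : ℝ) / 2) * (∑ i, v i * y i) -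
        μ ^ 2 / (2 * (1 + μ ^ 2 / n)) * (∑ i, v i ^ 2)) +
      Real.exp (-(μ ^ 2 * (2 + 3 * μ ^ 2 / n) / (2 * n * (1 + μ ^ 2 / n) ^ 2)) *
          (∑ i, y i ^ 2) -
        μ * (1 + 2 * μ ^ 2 / n) / (1 + μ ^ 2 / n) ^ ((3 : ℝ) / 2) * (∑ i, v i * y i) -
        μ ^ 2 / (2 * (1 + μ ^ 2 / n)) * (∑ i, v i ^ 2)) := by
  have hn : 0 < n := by
    rcases Nat.eq_zero_or_pos n with h | h
    · subst h; exact absurd (funext fun i => i.elim0) hy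
    · exact h
  have hN : (0:ℝ) < (n:ℝ) := Nat.cast_pos.mpr hn
  have hY : 0 < ∑ i, y i ^ 2 := by
    have h' : ∃ i, y i ≠ 0 := by
      by_contra h; push_neg at h; exact hy (funext h)
    obtain ⟨i, hi⟩ := h'
    exact Finset.sum_pos' (fun j _ => sq_nonneg _) ⟨i, Finset.mem_univ i, by positivity⟩
  have hμ0 : 0 < μ := lt_of_lt_of_le one_pos hμ
  have ha0 : (0:ℝ) < μ^2/n := by positivity
  have hs0 : (0:ℝ) < 1 + μ^2/n := by linarith
  have hs2 : (1:ℝ) + μ^2/n ≤ 2 := by linarith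
  have hS0 : 0 < Real.sqrt (1 + μ^2/n) := Real.sqrt_pos.mpr hs0
  have hS2 : Real.sqrt (1 + μ^2/n) ^ 2 = 1 + μ^2/n := Real.sq_sqrt hs0.le
  have h32 : (1 + μ^2/(n:ℝ)) ^ ((3:ℝ)/2) = (1 + μ^2/n) * Real.sqrt (1 + μ^2/n) := by
    rw [show (3:ℝ)/2 = 1 + 1/2 by norm_num, Real.rpow_add hs0, Real.rpow_one,
      ← Real.sqrt_eq_rpow]
  rw [h32]
  set Y := ∑ i, y i ^ 2 with hYdef
  set V := ∑ i, v i * y i with hVdef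
  set W := ∑ i, v i ^ 2 with hWdef
  set s := (1:ℝ) + μ^2/n with hsdef
  set S := Real.sqrt s with hSdef
  clear_value Y V W s S
  have rw1 : ∀ E : ℝ, Real.exp (E - μ^2/(2*s)*W) = Real.exp E * Real.exp (-(μ^2/(2*s)*W)) :=
    fun E => by rw [← Real.exp_add]; ring_nf
  rw [rw1, rw1, rw1, rw1, ← add_mul, ← add_mul]
  apply mul_le_mul_of_nonneg_right _ (Real.exp_pos _).le
  rw [show -(μ / (s * S)) * V = -(μ / (s * S) * V) by ring,
    show -(μ ^ 2 * (2 + 3 * μ ^ 2 / (n:ℝ)) / (2 * n * s ^ 2)) * Y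
        - μ * (1 + 2 * μ ^ 2 / (n:ℝ)) / (s * S) * V
      = -(μ ^ 2 * (2 + 3 * μ ^ 2 / (n:ℝ)) / (2 * n * s ^ 2) * Y)
        - μ * (1 + 2 * μ ^ 2 / (n:ℝ)) / (s * S) * V by ring]
  have hlog : (0:ℝ) < Real.log 2 := Real.log_pos (by norm_num)
  have h2' : -(μ*(2+μ^2/(n:ℝ)))/4 * Y ≤ V*(n:ℝ)*S := by
    rw [div_mul_eq_mul_div, div_mul_eq_mul_div, le_div_iff₀ hY] at h2
    linarith [h2]
  have key2 : 0 ≤ μ*(2+μ^2/(n:ℝ))*Y + 4*(n:ℝ)*V*S := by nlinarith [h2']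
  have hS2' : S^2 = 1 + μ^2/(n:ℝ) := hS2.trans hsdef
  have hBeq : μ/(s*S)*V = μ*V*S/s^2 := by
    rw [div_mul_eq_mul_div, div_eq_div_iff (by positivity) (by positivity)]
    linear_combination (-(μ*V*s)) * hS2
  have hABpos : 0 ≤ μ^2*(2+μ^2/(n:ℝ))/(2*(n:ℝ)*s^2)*Y + 2*(μ/(s*S)*V) := by
    rw [hBeq]
    have heq : μ^2*(2+μ^2/(n:ℝ))/(2*(n:ℝ)*s^2)*Y + 2*(μ*V*S/s^2)
        = μ/(2*(n:ℝ)*s^2) * (μ*(2+μ^2/(n:ℝ))*Y + 4*(n:ℝ)*V*S) := by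
      field_simp
      ring
    rw [heq]
    exact mul_nonneg (by positivity) key2
  apply key_exp
  · rw [div_mul_eq_mul_div, le_div_iff₀ (by positivity)]
    rw [div_le_div_iff₀ (by positivity) (by positivity)] at h1
    nlinarith [h1, mul_nonneg (mul_nonneg hY.le
      (by positivity : (0:ℝ) ≤ μ*(2+μ^2/(n:ℝ)))) (sub_nonneg.mpr hμ)]
  · exact hABpos
  · have hBB : μ*(1+2*μ^2/(n:ℝ))/(s*S)*V + μ/(s*S)*V = 2*s*(μ/(s*S)*V) := by
      rw [hsdef]; ring
    rw [hBB]
    have hnum : μ^2*(2+3*μ^2/(n:ℝ)) ≤ s*(μ^2*(2+μ^2/(n:ℝ))) := by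
      rw [hsdef, ← sub_nonneg]
      have h : (1+μ^2/(n:ℝ))*(μ^2*(2+μ^2/(n:ℝ))) - μ^2*(2+3*μ^2/(n:ℝ))
          = (μ^3/(n:ℝ))^2 := by ring
      rw [h]; positivity
    have hA'A : μ^2*(2+3*μ^2/(n:ℝ))/(2*(n:ℝ)*s^2)*Y
        ≤ s*(μ^2*(2+μ^2/(n:ℝ))/(2*(n:ℝ)*s^2)*Y) := by
      calc μ^2*(2+3*μ^2/(n:ℝ))/(2*(n:ℝ)*s^2)*Y
          ≤ s*(μ^2*(2+μ^2/(n:ℝ)))/(2*(n:ℝ)*s^2)*Y := by gcongr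
        _ = s*(μ^2*(2+μ^2/(n:ℝ))/(2*(n:ℝ)*s^2)*Y) := by ring
    linarith [hA'A, mul_nonneg (sub_nonneg.mpr hs2) hABpos]
end

section
/- There exists a constant c > 0 such that the following holds. Let X₁, X₂, …, X_m be i.i.d. N(0, (1/n)I_n) random vectors, with m = m_n and μ = μ_n depending on n. If μ²/n → 0 and (log m)/n → 0 as n → ∞, then E[ exp( (μ⁴/(2n(1+μ²/n)))·max_{1≤j≤m} ‖X_j‖₂² ) ] ≤ exp( cμ⁴/(n(1+μ²/n)) )·(1+o(1)); equivalently, limsup_n E[exp((μ⁴/(2n(1+μ²/n)))·max_j ‖X_j‖₂²)] / exp(cμ⁴/(n(1+μ²/n))) ≤ 1. -/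
open MeasureTheory ProbabilityTheory Filter
open scoped NNReal ENNReal

noncomputable section

/-- The joint law of `(X₁, …, X_m)`, i.i.d. `N(0, (1/n) I_n)` vectors. -/
def Xlaw (n m : ℕ) : Measure (Fin m → Fin n → ℝ) :=
  Measure.pi fun _ : Fin m => Measure.pi fun _ : Fin n => gaussianReal 0 (n : ℝ≥0)⁻¹

/-- `max_{1 ≤ j ≤ m} ‖X_j‖₂²`. -/
def maxNormSq (n m : ℕ) (hm : 0 < m) (ω : Fin m → Fin n → ℝ) : ℝ :=
  Finset.univ.sup' ⟨⟨0, hm⟩, Finset.mem_univ _⟩ fun j => ∑ i, ω j i ^ 2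

/-!
For `θ ≥ 1`, Lyapunov's inequality gives `E exp (t M) ≤ (E exp (θ t M)) ^ (1 / θ)` with
`M = maxⱼ ‖Xⱼ‖²`, and the union bound replaces `exp (θ t M)` by `∑ⱼ exp (θ t ‖Xⱼ‖²)`. Each summand
has expectation `(1 - 2 θ t / n) ^ (-n / 2) ≤ exp (2 θ t)` as long as `4 θ t ≤ n`, so
`E exp (t M) ≤ exp (log m / θ + 2 t)`. For `t = μ⁴ / (2 n (1 + μ² / n))` the choice
`θ = n / (4 (t + 1))` turns this into `exp (3 t + 4 log m / n)`, i.e. `c = 3 / 2`, because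
`t / n → 0` and `log m / n → 0`.
-/

open Real

lemma lintegral_le_lintegral_rpow_rpow_one_div {α : Type*} [MeasurableSpace α] {P : Measure α}
    [IsProbabilityMeasure P] {f : α → ℝ≥0∞} (hf : AEMeasurable f P) {θ : ℝ} (hθ : 1 ≤ θ) :
    ∫⁻ a, f a ∂P ≤ (∫⁻ a, f a ^ θ ∂P) ^ (1 / θ) := by
  rcases hθ.eq_or_lt with rfl | hθ
  · simp
  · simpa using ENNReal.lintegral_mul_le_Lp_mul_Lq P (Real.HolderConjugate.conjExponent hθ) hf
      (aemeasurable_const (b := 1))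

lemma inv_sqrt_one_sub_le_exp {r : ℝ} (h0 : 0 ≤ r) (h1 : r ≤ 1 / 2) : (√(1 - r))⁻¹ ≤ exp r := by
  have hinv : (1 - r)⁻¹ ≤ 1 + 2 * r := by
    rw [inv_le_iff_one_le_mul₀ (by linarith)]
    nlinarith
  calc (√(1 - r))⁻¹ = √((1 - r)⁻¹) := (sqrt_inv _).symm
    _ ≤ √(exp r ^ 2) := by
      gcongr
      rw [sq, ← exp_add]
      linarith [add_one_le_exp (r + r)]
    _ = exp r := sqrt_sq (exp_nonneg r)

lemma lintegral_exp_mul_sq_gaussianReal {v : ℝ≥0} (hv : v ≠ 0) {s : ℝ} (hs : 2 * s * v < 1) :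
    ∫⁻ x, ENNReal.ofReal (exp (s * x ^ 2)) ∂gaussianReal 0 v
      = ENNReal.ofReal (√(1 - 2 * s * v))⁻¹ := by
  set b : ℝ := (2 * (v : ℝ))⁻¹ - s
  have hb : 1 - 2 * s * v = 2 * v * b := by simp only [b]; field_simp
  have hb0 : 0 < b := pos_of_mul_pos_right (hb ▸ sub_pos.2 hs) (by positivity)
  -- the Gaussian density times `exp (s x²)` is again a centred Gaussian profile
  have hdens : ∀ x,
      gaussianPDFReal 0 v x * exp (s * x ^ 2) = (√(2 * π * v))⁻¹ * exp (-b * x ^ 2) := by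
    intro x
    rw [gaussianPDFReal, mul_assoc, ← exp_add]
    congr 2
    simp only [b]
    field_simp
    ring
  have hint : Integrable fun x => gaussianPDFReal 0 v x * exp (s * x ^ 2) := by
    simpa only [hdens] using (integrable_exp_neg_mul_sq hb0).const_mul _
  rw [gaussianReal_of_var_ne_zero 0 hv,
    lintegral_withDensity_eq_lintegral_mul _ (measurable_gaussianPDF 0 v) (by fun_prop)]
  simp only [Pi.mul_apply, gaussianPDF, ← ENNReal.ofReal_mul (gaussianPDFReal_nonneg 0 v _)]
  rw [← ofReal_integral_eq_lintegral_ofReal hint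
    (ae_of_all _ fun x => mul_nonneg (gaussianPDFReal_nonneg 0 v x) (exp_nonneg _))]
  simp only [hdens, integral_const_mul, integral_gaussian, hb]
  rw [← sqrt_inv, ← sqrt_mul (by positivity), ← sqrt_inv]
  congr 2
  field_simp

lemma lintegral_exp_mul_sq_gaussianReal_le {v : ℝ≥0} {s : ℝ} (hs : 0 ≤ s) (hsv : 4 * s * v ≤ 1) :
    ∫⁻ x, ENNReal.ofReal (exp (s * x ^ 2)) ∂gaussianReal 0 v
      ≤ ENNReal.ofReal (exp (2 * s * v)) := by
  rcases eq_or_ne v 0 with rfl | hv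
  · simp [gaussianReal_zero_var]
  rw [lintegral_exp_mul_sq_gaussianReal hv (by linarith)]
  exact ENNReal.ofReal_le_ofReal (inv_sqrt_one_sub_le_exp (by positivity) (by linarith))

lemma lintegral_exp_mul_sum_sq_pi_gaussianReal_le {ι : Type*} [Fintype ι] {v : ℝ≥0} {s : ℝ}
    (hs : 0 ≤ s) (hsv : 4 * s * v ≤ 1) :
    ∫⁻ x : ι → ℝ, ENNReal.ofReal (exp (s * ∑ i, x i ^ 2)) ∂Measure.pi (fun _ => gaussianReal 0 v)
      ≤ ENNReal.ofReal (exp (2 * s * v * Fintype.card ι)) := by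
  have hprod : ∀ x : ι → ℝ,
      ENNReal.ofReal (exp (s * ∑ i, x i ^ 2)) = ∏ i, ENNReal.ofReal (exp (s * x i ^ 2)) := by
    intro x
    rw [Finset.mul_sum, exp_sum, ENNReal.ofReal_prod_of_nonneg fun _ _ => exp_nonneg _]
  simp only [hprod]
  rw [lintegral_prod_eq_prod_lintegral_of_indepFun _ _
      (iIndepFun_pi (X := fun _ x => ENNReal.ofReal (exp (s * x ^ 2))) fun _ => by fun_prop)
      fun _ => by fun_prop]
  simp only [fun i => (measurePreserving_eval (fun _ : ι => gaussianReal 0 v) i).lintegral_comp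
    (f := fun x => ENNReal.ofReal (exp (s * x ^ 2))) (by fun_prop)]
  calc ∏ i : ι, ∫⁻ x, ENNReal.ofReal (exp (s * x ^ 2)) ∂gaussianReal 0 v
      ≤ ∏ _i : ι, ENNReal.ofReal (exp (2 * s * v)) :=
        Finset.prod_le_prod' fun _ _ => lintegral_exp_mul_sq_gaussianReal_le hs hsv
    _ = ENNReal.ofReal (exp (2 * s * v * Fintype.card ι)) := by
      rw [Finset.prod_const, Finset.card_univ, ← ENNReal.ofReal_pow (exp_nonneg _), ← exp_nat_mul,
        mul_comm]

lemma lintegral_exp_mul_sup'_le {Ω ι : Type*} [MeasurableSpace Ω] {P : Measure Ω}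
    [IsProbabilityMeasure P] {s : Finset ι} (hs : s.Nonempty) {f : ι → Ω → ℝ}
    (hf : ∀ j ∈ s, Measurable (f j)) {t θ : ℝ} (hθ : 1 ≤ θ) :
    ∫⁻ ω, ENNReal.ofReal (exp (t * s.sup' hs fun j => f j ω)) ∂P
      ≤ (∑ j ∈ s, ∫⁻ ω, ENNReal.ofReal (exp (θ * t * f j ω)) ∂P) ^ (1 / θ) := by
  have hsup : Measurable fun ω => s.sup' hs fun j => f j ω := by
    rw [show (fun ω => s.sup' hs fun j => f j ω) = s.sup' hs f from
      funext fun ω => (Finset.sup'_apply hs f ω).symm]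
    exact Finset.measurable_sup' hs hf
  refine (lintegral_le_lintegral_rpow_rpow_one_div
    (hsup.const_mul t).exp.ennreal_ofReal.aemeasurable hθ).trans ?_
  gcongr
  rw [← lintegral_finsetSum _ fun j hj => by fun_prop]
  refine lintegral_mono fun ω => ?_
  obtain ⟨j, hj, hmax⟩ := Finset.exists_mem_eq_sup' hs fun j => f j ω
  rw [ENNReal.ofReal_rpow_of_pos (exp_pos _), ← exp_mul, hmax, mul_comm, ← mul_assoc]
  exact Finset.single_le_sum (f := fun j => ENNReal.ofReal (exp (θ * t * f j ω)))
    (fun _ _ => zero_le) hj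

instance isProbabilityMeasure_Xlaw (n m : ℕ) : IsProbabilityMeasure (Xlaw n m) := by
  unfold Xlaw; infer_instance

lemma lintegral_exp_mul_maxNormSq_le (n m : ℕ) (hm : 0 < m) {t θ : ℝ} (ht : 0 ≤ t) (hθ : 1 ≤ θ)
    (hθt : 4 * θ * t ≤ n) :
    ∫⁻ ω, ENNReal.ofReal (exp (t * maxNormSq n m hm ω)) ∂Xlaw n m
      ≤ ENNReal.ofReal (exp (log m / θ + 2 * t)) := by
  have hθt0 : 0 ≤ θ * t := by positivity
  have hrow : ∀ j : Fin m, ∫⁻ ω, ENNReal.ofReal (exp (θ * t * ∑ i, ω j i ^ 2)) ∂Xlaw n m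
      ≤ ENNReal.ofReal (exp (2 * θ * t)) := by
    intro j
    rw [Xlaw, (measurePreserving_eval
      (fun _ : Fin m => Measure.pi fun _ : Fin n => gaussianReal 0 (n : ℝ≥0)⁻¹) j).lintegral_comp
      (f := fun x : Fin n → ℝ => ENNReal.ofReal (exp (θ * t * ∑ i, x i ^ 2))) (by fun_prop)]
    have hvn : (((n : ℝ≥0)⁻¹ : ℝ≥0) : ℝ) * n ≤ 1 := by
      push_cast; exact inv_mul_le_one_of_le₀ le_rfl (Nat.cast_nonneg n)
    refine (lintegral_exp_mul_sum_sq_pi_gaussianReal_le hθt0 ?_).trans ?_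
    · nlinarith [mul_le_mul_of_nonneg_right hθt (NNReal.coe_nonneg (n : ℝ≥0)⁻¹)]
    · rw [Fintype.card_fin]
      exact ENNReal.ofReal_le_ofReal
        (exp_le_exp.2 (by nlinarith [mul_le_mul_of_nonneg_left hvn hθt0]))
  calc ∫⁻ ω, ENNReal.ofReal (exp (t * maxNormSq n m hm ω)) ∂Xlaw n m
      ≤ (∑ j : Fin m, ∫⁻ ω, ENNReal.ofReal (exp (θ * t * ∑ i, ω j i ^ 2)) ∂Xlaw n m) ^ (1 / θ) :=
        lintegral_exp_mul_sup'_le _ (fun _ _ => by fun_prop) hθ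
    _ ≤ (∑ _j : Fin m, ENNReal.ofReal (exp (2 * θ * t))) ^ (1 / θ) := by
        gcongr with j; exact hrow j
    _ = ENNReal.ofReal (exp (log m / θ + 2 * t)) := by
        rw [Finset.sum_const, Finset.card_univ, Fintype.card_fin, nsmul_eq_mul,
          ← ENNReal.ofReal_natCast, ← ENNReal.ofReal_mul (Nat.cast_nonneg m),
          ENNReal.ofReal_rpow_of_pos (by positivity), rpow_def_of_pos (by positivity),
          log_mul (by positivity) (exp_pos _).ne', log_exp]
        congr 2
        field_simp

lemma lintegral_exp_mul_maxNormSq_le_exp_three_mul (n m : ℕ) (hm : 0 < m) {t : ℝ} (ht : 0 ≤ t)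
    (htn : 4 * (t + 1) ≤ n) (hmn : 4 * log m ≤ n) :
    ∫⁻ ω, ENNReal.ofReal (exp (t * maxNormSq n m hm ω)) ∂Xlaw n m
      ≤ ENNReal.ofReal (exp (3 * t + 4 * log m / n)) := by
  have hn : (0 : ℝ) < n := by linarith
  set θ := n / (4 * (t + 1))
  have hθ : 1 ≤ θ := (one_le_div (by positivity)).2 htn
  have hθt : 4 * θ * t ≤ n := by
    rw [show 4 * θ * t = n * (t / (t + 1)) by simp only [θ]; field_simp]
    exact mul_le_of_le_one_right hn.le ((div_le_one (by positivity)).2 (by linarith))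
  refine (lintegral_exp_mul_maxNormSq_le n m hm ht hθ hθt).trans
    (ENNReal.ofReal_le_ofReal (exp_le_exp.2 ?_))
  have hLθ : log m / θ = t * (4 * log m / n) + 4 * log m / n := by
    simp only [θ]; field_simp
  have : t * (4 * log m / n) ≤ t := mul_le_of_le_one_right ht ((div_le_one hn).2 hmn)
  linarith

lemma tendsto_four_mul_add_one_div_atTop {μ : ℕ → ℝ}
    (hμ : Tendsto (fun n => μ n ^ 2 / n) atTop (nhds 0)) :
    Tendsto (fun n : ℕ => 4 * (μ n ^ 4 / (2 * n * (1 + μ n ^ 2 / n)) + 1) / n) atTop (nhds 0) := by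
  have hupper : Tendsto (fun n => 2 * (μ n ^ 2 / n) ^ 2 + 4 * (1 / (n : ℝ))) atTop (nhds 0) := by
    simpa using ((hμ.pow 2).const_mul 2).add (tendsto_one_div_atTop_nhds_zero_nat.const_mul 4)
  refine tendsto_of_tendsto_of_tendsto_of_le_of_le' tendsto_const_nhds hupper
    (Eventually.of_forall fun n => by positivity) ?_
  filter_upwards [eventually_gt_atTop 0] with n hn
  have hn : (0 : ℝ) < n := Nat.cast_pos.2 hn
  have hu : 0 ≤ μ n ^ 2 / n := by positivity
  have ht : μ n ^ 4 / (2 * n * (1 + μ n ^ 2 / n)) ≤ μ n ^ 4 / (2 * n) :=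
    div_le_div_of_nonneg_left (by positivity) (by positivity) (by nlinarith)
  calc 4 * (μ n ^ 4 / (2 * n * (1 + μ n ^ 2 / n)) + 1) / n
      ≤ 4 * (μ n ^ 4 / (2 * n) + 1) / n := by gcongr
    _ = 2 * (μ n ^ 2 / n) ^ 2 + 4 * (1 / n) := by field_simp; ring

/-- **Lemma 12.** There is a constant `c > 0` such that for any sequences `m_n`, `μ_n`
with `μ²/n → 0` and `(log m)/n → 0`,
`E exp((μ⁴/(2n(1+μ²/n))) max_j ‖X_j‖₂²) ≤ exp(c μ⁴/(n(1+μ²/n))) (1 + o(1))`. -/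
theorem mgf_max_chi_square_bound :
    ∃ c : ℝ, 0 < c ∧ ∀ (m : ℕ → ℕ) (μ : ℕ → ℝ) (hm0 : ∀ n, 0 < m n),
      Tendsto (fun n => μ n ^ 2 / n) atTop (nhds 0) →
      Tendsto (fun n => Real.log (m n) / n) atTop (nhds 0) →
      Filter.limsup (fun n =>
          (∫⁻ ω, ENNReal.ofReal
              (Real.exp (μ n ^ 4 / (2 * n * (1 + μ n ^ 2 / n)) *
                maxNormSq n (m n) (hm0 n) ω)) ∂ Xlaw n (m n)).toReal /
            Real.exp (c * μ n ^ 4 / (n * (1 + μ n ^ 2 / n)))) atTop ≤ 1 := by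
  refine ⟨3 / 2, by norm_num, fun m μ hm0 hμ hlog => ?_⟩
  set t : ℕ → ℝ := fun n => μ n ^ 4 / (2 * n * (1 + μ n ^ 2 / n))
  have ht : ∀ n, 0 ≤ t n := fun n => by simp only [t]; positivity
  have hbound : ∀ᶠ n in atTop,
      (∫⁻ ω, ENNReal.ofReal (exp (t n * maxNormSq n (m n) (hm0 n) ω)) ∂Xlaw n (m n)).toReal /
        exp (3 / 2 * μ n ^ 4 / (n * (1 + μ n ^ 2 / n))) ≤ exp (4 * log (m n) / n) := by
    filter_upwards [(tendsto_four_mul_add_one_div_atTop hμ).eventually (eventually_le_nhds one_pos),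
      hlog.eventually (eventually_le_nhds (by norm_num : (0 : ℝ) < 1 / 4)),
      eventually_gt_atTop 0] with n htn hmn hn
    have hn : (0 : ℝ) < n := Nat.cast_pos.2 hn
    have h3t : 3 / 2 * μ n ^ 4 / (n * (1 + μ n ^ 2 / n)) = 3 * t n := by
      simp only [t]; field_simp
    rw [h3t, div_le_iff₀ (exp_pos _), ← exp_add, add_comm]
    refine ENNReal.toReal_le_of_le_ofReal (exp_nonneg _)
      (lintegral_exp_mul_maxNormSq_le_exp_three_mul n (m n) (hm0 n) (ht n) ?_ ?_)
    · rwa [div_le_one hn] at htn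
    · rw [div_le_iff₀ hn] at hmn; linarith
  have hlim : Tendsto (fun n => exp (4 * log (m n) / n)) atTop (nhds 1) := by
    simpa [Function.comp_def] using
      (continuous_exp.tendsto 0).comp (by simpa [mul_div_assoc] using hlog.const_mul 4)
  refine (limsup_le_limsup hbound ?_ hlim.isBoundedUnder_le).trans hlim.limsup_eq.le
  exact isCoboundedUnder_le_of_le atTop fun n => by positivity
end
end

section
/- Let η(u, χ) = sign(u)·(|u| − χ)₊ be the soft thresholding function, and let ω be a random variable that is a mixture of centered Gaussians: there is a random variable θ with ω | θ ~ N(0, σ_θ²), where σ_θ > 0 almost surely and E σ_θ² < ∞. For χ₁ > 0, χ₂ ≥ 0 define g(u; χ₁, χ₂) = E( (1/(1+χ₂))·η(u + ω, χ₁) − u )² for u ∈ ℝ. Then: (i) u ↦ g(u; χ₁, χ₂) is an even function and is nondecreasing on [0, ∞); (ii) for every c > 0, max over pairs (x, y) with x² + y² = c² of [g(x; χ₁, χ₂) + g(y; χ₁, χ₂)] equals 2·g(c/√2; χ₁, χ₂). -/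
open MeasureTheory ProbabilityTheory
open scoped NNReal ENNReal

noncomputable section

/-- The soft thresholding function `η(u, χ) = sign(u) (|u| − χ)₊`. -/
def softThreshold (u χ : ℝ) : ℝ := Real.sign u * max (|u| - χ) 0

/-- The law of a centered-Gaussian mixture `ω`: given `θ`, `ω | θ ~ N(0, σ_θ²)`.
Here `ν` is the law of the (conditional) variance `σ_θ²`. -/
def mixtureLaw (ν : Measure ℝ≥0) : Measure ℝ := ν.bind fun s => gaussianReal 0 s

/-- `g(u; χ₁, χ₂) = E((1/(1+χ₂)) η(u + ω, χ₁) − u)²` where `ω` is the Gaussian mixture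
with variance-law `ν`. -/
def gRisk (ν : Measure ℝ≥0) (χ₁ χ₂ : ℝ) (u : ℝ) : ℝ :=
  ∫ w, ((1 / (1 + χ₂)) * softThreshold (u + w) χ₁ - u) ^ 2 ∂ mixtureLaw ν

/-!
Write `a = 1/(1+χ₂) ∈ (0,1]`, `m(u) = E η(u+ω, χ₁)` and `P(u) = P(|u+ω| > χ₁)`. Since
`η(·, χ₁)` is piecewise linear with kinks at `±χ₁` and `ω` has no atoms, one may differentiate
under the expectation: `m' = P` and `g'(u) = 2u(1 - a P(u)) - 2a(1-a) m(u)`. Symmetry of `ω`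
makes `g` even and `m(0) = 0`; together with `P ≤ 1` this gives `m(u) ≤ u`, hence
`g'(u) ≥ 2u(1-a)² ≥ 0` for `u ≥ 0`.

For a single centered Gaussian, `P(u) = 1 - N(0,s)[-χ₁-u, χ₁-u]` is nondecreasing on `[0,∞)`,
as the window slides away from the mode of a symmetric unimodal density; hence so is `P` for
the mixture. Then `m` is convex on `[0,∞)` with `m(0) = 0`, so `m(u)/u` is nondecreasing, and
`d/dt g(√t) = 1 - a P(√t) - a(1-a) m(√t)/√t` is nonincreasing: `t ↦ g(√t)` is concave.
Jensen's inequality at the midpoint of `x²` and `y²` then bounds `g(x) + g(y)` by `2 g(c/√2)`.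
-/

open Set Filter

section SoftThreshold

variable {χ x y : ℝ}

lemma softThreshold_of_le (hχ : 0 ≤ χ) (h : χ ≤ x) : softThreshold x χ = x - χ := by
  rcases (hχ.trans h).eq_or_lt with hx | hx
  · obtain rfl : χ = 0 := le_antisymm (hx ▸ h) hχ
    simp [← hx, softThreshold]
  · rw [softThreshold, Real.sign_of_pos hx, abs_of_pos hx, max_eq_left (by linarith), one_mul]

lemma softThreshold_of_abs_le (h : |x| ≤ χ) : softThreshold x χ = 0 := by
  rw [softThreshold, max_eq_right (by linarith), mul_zero]

lemma softThreshold_neg (x χ : ℝ) : softThreshold (-x) χ = -softThreshold x χ := by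
  rw [softThreshold, softThreshold, abs_neg, Real.sign_neg, neg_mul]

lemma softThreshold_of_le_neg (hχ : 0 ≤ χ) (h : x ≤ -χ) : softThreshold x χ = x + χ := by
  rw [← neg_neg x, softThreshold_neg, softThreshold_of_le hχ (by linarith)]
  ring

lemma softThreshold_eq_sub_clamp (hχ : 0 ≤ χ) (x : ℝ) :
    softThreshold x χ = x - max (min x χ) (-χ) := by
  rcases le_total x (-χ) with h | h
  · rw [softThreshold_of_le_neg hχ h, min_eq_left (by linarith), max_eq_right h]
    ring
  rcases le_total x χ with h' | h'
  · rw [softThreshold_of_abs_le (abs_le.2 ⟨h, h'⟩), min_eq_left h', max_eq_left h, sub_self]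
  · rw [softThreshold_of_le hχ h', min_eq_right h', max_eq_left (by linarith)]

lemma continuous_softThreshold (hχ : 0 ≤ χ) : Continuous (softThreshold · χ) := by
  simp only [softThreshold_eq_sub_clamp hχ]
  fun_prop

lemma softThreshold_sub_mem_Icc (hχ : 0 ≤ χ) (h : y ≤ x) :
    softThreshold x χ - softThreshold y χ ∈ Icc 0 (x - y) := by
  simp only [softThreshold_eq_sub_clamp hχ, mem_Icc]
  constructor
  · have : max (min x χ) (-χ) - max (min y χ) (-χ) ≤ x - y := by
      simp only [min_def, max_def]
      split_ifs <;> linarith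
    linarith
  · have : max (min y χ) (-χ) ≤ max (min x χ) (-χ) := by gcongr
    linarith

lemma abs_softThreshold_sub_le (hχ : 0 ≤ χ) (x y : ℝ) :
    |softThreshold x χ - softThreshold y χ| ≤ |x - y| := by
  wlog h : y ≤ x generalizing x y
  · rw [abs_sub_comm, abs_sub_comm x]
    exact this y x (le_of_not_ge h)
  obtain ⟨h₀, h₁⟩ := softThreshold_sub_mem_Icc hχ h
  rw [abs_of_nonneg h₀, abs_of_nonneg (sub_nonneg.2 h)]
  exact h₁

lemma abs_softThreshold_le (hχ : 0 ≤ χ) (x : ℝ) : |softThreshold x χ| ≤ |x| := by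
  simpa [softThreshold_of_abs_le (abs_zero.trans_le hχ)] using abs_softThreshold_sub_le hχ x 0

lemma hasDerivAt_softThreshold (hχ : 0 ≤ χ) (h : |x| ≠ χ) :
    HasDerivAt (softThreshold · χ) (if χ < |x| then 1 else 0) x := by
  rcases h.lt_or_gt with hlt | hgt
  · rw [if_neg hlt.not_gt]
    refine (hasDerivAt_const x 0).congr_of_eventuallyEq ?_
    filter_upwards [Ioo_mem_nhds (neg_lt.1 ((neg_le_abs x).trans_lt hlt))
      ((le_abs_self x).trans_lt hlt)] with y hy
    exact softThreshold_of_abs_le (abs_le.2 ⟨hy.1.le, hy.2.le⟩)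
  rw [if_pos hgt]
  rcases lt_abs.1 hgt with hx | hx
  · refine ((hasDerivAt_id x).sub_const χ).congr_of_eventuallyEq ?_
    filter_upwards [Ioi_mem_nhds hx] with y hy
    exact softThreshold_of_le hχ (le_of_lt hy)
  · refine ((hasDerivAt_id x).add_const χ).congr_of_eventuallyEq ?_
    filter_upwards [Iio_mem_nhds (show x < -χ by linarith)] with y hy
    exact softThreshold_of_le_neg hχ (le_of_lt hy)

lemma abs_sq_mul_softThreshold_sub_le (hχ : 0 ≤ χ) (a w x y : ℝ) :
    |(a * softThreshold (x + w) χ - x) ^ 2 - (a * softThreshold (y + w) χ - y) ^ 2|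
      ≤ 2 * (|a| + 1) ^ 2 * (max |x| |y| + |w|) * |x - y| := by
  set p := a * softThreshold (x + w) χ - x
  set q := a * softThreshold (y + w) χ - y
  have hp : |p| ≤ (|a| + 1) * (max |x| |y| + |w|) := by
    have h₁ := abs_sub (a * softThreshold (x + w) χ) x
    have h₂ := abs_softThreshold_le hχ (x + w)
    rw [abs_mul] at h₁
    nlinarith [abs_add_le x w, abs_nonneg a, le_max_left |x| |y|, abs_nonneg w,
      abs_nonneg (softThreshold (x + w) χ)]
  have hq : |q| ≤ (|a| + 1) * (max |x| |y| + |w|) := by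
    have h₁ := abs_sub (a * softThreshold (y + w) χ) y
    have h₂ := abs_softThreshold_le hχ (y + w)
    rw [abs_mul] at h₁
    nlinarith [abs_add_le y w, abs_nonneg a, le_max_right |x| |y|, abs_nonneg w,
      abs_nonneg (softThreshold (y + w) χ)]
  have hpq : |p - q| ≤ (|a| + 1) * |x - y| := by
    have h₁ := abs_sub (a * (softThreshold (x + w) χ - softThreshold (y + w) χ)) (x - y)
    have h₂ := abs_softThreshold_sub_le hχ (x + w) (y + w)
    rw [abs_mul] at h₁
    rw [add_sub_add_right_eq_sub] at h₂
    have : p - q = a * (softThreshold (x + w) χ - softThreshold (y + w) χ) - (x - y) := by ring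
    rw [this]
    nlinarith [abs_nonneg a, abs_nonneg (x - y)]
  calc |p ^ 2 - q ^ 2| = |p + q| * |p - q| := by rw [sq_sub_sq, abs_mul]
    _ ≤ (|p| + |q|) * ((|a| + 1) * |x - y|) :=
        mul_le_mul (abs_add_le p q) hpq (abs_nonneg _) (by positivity)
    _ ≤ 2 * ((|a| + 1) * (max |x| |y| + |w|)) * ((|a| + 1) * |x - y|) := by
        gcongr; linarith
    _ = 2 * (|a| + 1) ^ 2 * (max |x| |y| + |w|) * |x - y| := by ring

end SoftThreshold

def softThresholdMean (μ : Measure ℝ) (χ u : ℝ) : ℝ := ∫ w, softThreshold (u + w) χ ∂μ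

def exceedanceProb (μ : Measure ℝ) (χ u : ℝ) : ℝ := μ.real {w | χ < |u + w|}

def thresholdRisk (μ : Measure ℝ) (a χ u : ℝ) : ℝ :=
  ∫ w, (a * softThreshold (u + w) χ - u) ^ 2 ∂μ

section ShiftedNoise

variable {μ : Measure ℝ} {χ a : ℝ}

lemma measurableSet_exceedance (χ u : ℝ) : MeasurableSet {w : ℝ | χ < |u + w|} :=
  measurableSet_lt measurable_const (by fun_prop)

lemma ae_abs_add_ne [NullSingletonClass μ] (u χ : ℝ) : ∀ᵐ w ∂μ, |u + w| ≠ χ := by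
  have hsub : {w : ℝ | ¬|u + w| ≠ χ} ⊆ {χ - u, -χ - u} := by
    intro w hw
    show w = χ - u ∨ w = -χ - u
    rcases eq_or_eq_neg_of_abs_eq (not_not.1 hw) with h | h
    · exact Or.inl (by linarith)
    · exact Or.inr (by linarith)
  exact measure_mono_null hsub ((toFinite _).measure_zero μ)

lemma memLp_softThreshold_add [IsFiniteMeasure μ] {p : ℝ≥0∞} (hχ : 0 ≤ χ) (hμ : MemLp id p μ)
    (u : ℝ) : MemLp (fun w => softThreshold (u + w) χ) p μ :=
  ((memLp_const u).add hμ).mono ((continuous_softThreshold hχ).comp_aestronglyMeasurable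
    (by fun_prop)) (ae_of_all _ fun w => abs_softThreshold_le hχ (u + w))

lemma hasDerivAt_softThresholdMean [IsFiniteMeasure μ] [NullSingletonClass μ] (hχ : 0 ≤ χ)
    (hμ : Integrable id μ) (u : ℝ) :
    HasDerivAt (softThresholdMean μ χ) (exceedanceProb μ χ u) u := by
  have hμ₁ : MemLp id 1 μ := memLp_one_iff_integrable.2 hμ
  have key := hasDerivAt_integral_of_dominated_loc_of_lip (bound := fun _ => (1 : ℝ))
    (F := fun x w => softThreshold (x + w) χ)
    (F' := fun w => {w | χ < |u + w|}.indicator 1 w) (univ_mem)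
    (Eventually.of_forall fun x => (memLp_softThreshold_add hχ hμ₁ x).aestronglyMeasurable)
    (memLp_one_iff_integrable.1 (memLp_softThreshold_add hχ hμ₁ u))
    ((measurable_const.indicator (measurableSet_exceedance χ u)).aestronglyMeasurable)
    (ae_of_all _ fun w => LipschitzWith.lipschitzOnWith <| LipschitzWith.of_dist_le_mul
      fun x y => by simpa [Real.dist_eq] using abs_softThreshold_sub_le hχ (x + w) (y + w))
    (integrable_const _) ?_
  · rw [integral_indicator_one (measurableSet_exceedance χ u)] at key
    exact key.2
  · filter_upwards [ae_abs_add_ne u χ] with w hw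
    simpa [Set.indicator_apply, add_comm] using
      (hasDerivAt_softThreshold hχ hw).comp_add_const u w

lemma hasDerivAt_thresholdRisk [IsProbabilityMeasure μ] [NullSingletonClass μ] (hχ : 0 ≤ χ)
    (hμ : MemLp id 2 μ) (u : ℝ) :
    HasDerivAt (thresholdRisk μ a χ)
      (2 * u - 2 * a * u * exceedanceProb μ χ u - 2 * a * (1 - a) * softThresholdMean μ χ u)
      u := by
  have hη := memLp_softThreshold_add hχ hμ
  have hη₁ : Integrable (fun w => softThreshold (u + w) χ) μ :=
    (memLp_softThreshold_add hχ (hμ.mono_exponent one_le_two) u).integrable le_rfl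
  have hind : Integrable (fun w => {w | χ < |u + w|}.indicator (1 : ℝ → ℝ) w) μ :=
    (integrable_const 1).indicator (measurableSet_exceedance χ u)
  have key := hasDerivAt_integral_of_dominated_loc_of_lip
    (bound := fun w => 2 * (|a| + 1) ^ 2 * (|u| + 1 + |w|))
    (F := fun x w => (a * softThreshold (x + w) χ - x) ^ 2)
    (F' := fun w => 2 * u - 2 * a * u * {w | χ < |u + w|}.indicator 1 w
      - 2 * a * (1 - a) * softThreshold (u + w) χ)
    (Metric.ball_mem_nhds u one_pos)
    (Eventually.of_forall fun x => (((hη x).const_mul a).sub (memLp_const x)).integrable_sq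
      |>.aestronglyMeasurable)
    (((hη u).const_mul a).sub (memLp_const u)).integrable_sq
    (((integrable_const _).sub (hind.const_mul _)).sub (hη₁.const_mul _)).aestronglyMeasurable
    (ae_of_all _ fun w => LipschitzOnWith.of_dist_le_mul fun x hx y hy => by
      have hxy : max |x| |y| ≤ |u| + 1 := by
        rw [Metric.mem_ball, Real.dist_eq] at hx hy
        refine max_le ?_ ?_ <;>
          linarith [abs_sub_abs_le_abs_sub x u, abs_sub_abs_le_abs_sub y u]
      rw [Real.dist_eq, Real.dist_eq, Real.coe_nnabs,
        abs_of_nonneg (a := 2 * (|a| + 1) ^ 2 * (|u| + 1 + |w|)) (by positivity)]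
      exact (abs_sq_mul_softThreshold_sub_le hχ a w x y).trans (by gcongr))
    (((integrable_const _).add (hμ.integrable one_le_two).abs).const_mul _) ?_
  · refine key.2.congr_deriv ?_
    rw [integral_sub, integral_sub, integral_const_mul, integral_const_mul, integral_const_mul,
      integral_indicator_one (measurableSet_exceedance χ u), integral_const, probReal_univ,
      one_smul]
    · rfl
    exacts [integrable_const _, hind.const_mul _, (integrable_const _).sub (hind.const_mul _),
      hη₁.const_mul _]
  · filter_upwards [ae_abs_add_ne u χ] with w hw
    have hd := (((hasDerivAt_softThreshold hχ hw).comp_add_const u w).const_mul a).sub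
      (hasDerivAt_id u) |>.pow 2
    refine hd.congr_deriv ?_
    -- `η(u + w)` vanishes off the exceedance set, so `2(aη - u)(a𝟙 - 1)` collapses to `F'`
    by_cases hout : χ < |u + w|
    · simp only [hout, if_true, Set.indicator_of_mem (show w ∈ {w | χ < |u + w|} from hout),
        Pi.one_apply, Pi.sub_apply, id_eq]
      ring
    · simp only [hout, if_false, Set.indicator_of_notMem (show w ∉ {w | χ < |u + w|} from hout),
        softThreshold_of_abs_le (le_of_not_gt hout), Pi.sub_apply, id_eq]
      ring

end ShiftedNoise

section Symmetric

variable {μ : Measure ℝ} [μ.IsNegInvariant] {χ a : ℝ}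

lemma thresholdRisk_neg (a χ u : ℝ) : thresholdRisk μ a χ (-u) = thresholdRisk μ a χ u := by
  rw [thresholdRisk, ← integral_neg_eq_self]
  congr 1 with w
  rw [← neg_add, softThreshold_neg]
  ring

lemma softThresholdMean_zero (χ : ℝ) : softThresholdMean μ χ 0 = 0 := by
  have h := integral_neg_eq_self (fun w => softThreshold w χ) μ
  simp only [softThreshold_neg, integral_neg] at h
  simpa [softThresholdMean] using neg_eq_self.1 h

variable [IsProbabilityMeasure μ] [NullSingletonClass μ]

lemma softThresholdMean_le_self (hχ : 0 ≤ χ) (hμ : Integrable id μ) {u : ℝ} (hu : 0 ≤ u) :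
    softThresholdMean μ χ u ≤ u := by
  have hder : ∀ x, HasDerivAt (fun x => softThresholdMean μ χ x - x)
      (exceedanceProb μ χ x - 1) x :=
    fun x => (hasDerivAt_softThresholdMean hχ hμ x).sub (hasDerivAt_id x)
  have hanti : AntitoneOn (fun x => softThresholdMean μ χ x - x) (Ici 0) :=
    antitoneOn_of_deriv_nonpos (convex_Ici 0)
      (fun x _ => (hder x).continuousAt.continuousWithinAt)
      (fun x _ => (hder x).differentiableAt.differentiableWithinAt)
      (fun x _ => (hder x).deriv ▸ sub_nonpos.2 measureReal_le_one)
  have := hanti self_mem_Ici hu hu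
  simp only [softThresholdMean_zero, sub_zero] at this
  linarith

lemma monotoneOn_thresholdRisk (hχ : 0 ≤ χ) (ha : a ∈ Icc (0 : ℝ) 1) (hμ : MemLp id 2 μ) :
    MonotoneOn (thresholdRisk μ a χ) (Ici 0) := by
  have hder := hasDerivAt_thresholdRisk (a := a) hχ hμ
  refine monotoneOn_of_deriv_nonneg (convex_Ici 0)
    (fun x _ => (hder x).continuousAt.continuousWithinAt)
    (fun x _ => (hder x).differentiableAt.differentiableWithinAt) fun x hx => ?_
  rw [interior_Ici, mem_Ioi] at hx
  rw [(hder x).deriv]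
  have hP : exceedanceProb μ χ x ≤ 1 := measureReal_le_one
  have hm := softThresholdMean_le_self hχ (hμ.integrable one_le_two) hx.le
  have ha' : 0 ≤ a * (1 - a) := mul_nonneg ha.1 (sub_nonneg.2 ha.2)
  nlinarith [mul_le_mul_of_nonneg_left hP (mul_nonneg hx.le ha.1),
    mul_le_mul_of_nonneg_left hm ha', mul_nonneg hx.le (sq_nonneg (1 - a))]

end Symmetric

section Concavity

variable {μ : Measure ℝ} [IsProbabilityMeasure μ] [NullSingletonClass μ] {χ a : ℝ}

lemma convexOn_softThresholdMean (hχ : 0 ≤ χ) (hμ : Integrable id μ)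
    (hP : MonotoneOn (exceedanceProb μ χ) (Ici 0)) :
    ConvexOn ℝ (Ici 0) (softThresholdMean μ χ) := by
  have hder := hasDerivAt_softThresholdMean hχ hμ
  refine MonotoneOn.convexOn_of_deriv (convex_Ici 0)
    (fun x _ => (hder x).continuousAt.continuousWithinAt)
    (fun x _ => (hder x).differentiableAt.differentiableWithinAt) fun x hx y hy hxy => ?_
  rw [interior_Ici] at hx hy
  rw [(hder x).deriv, (hder y).deriv]
  exact hP (mem_Ici_of_Ioi hx) (mem_Ici_of_Ioi hy) hxy

lemma monotoneOn_softThresholdMean_div [μ.IsNegInvariant] (hχ : 0 ≤ χ) (hμ : Integrable id μ)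
    (hP : MonotoneOn (exceedanceProb μ χ) (Ici 0)) :
    MonotoneOn (fun u => softThresholdMean μ χ u / u) (Ioi 0) := by
  intro x hx y hy hxy
  have h := (convexOn_softThresholdMean hχ hμ hP).slope_mono self_mem_Ici
    ⟨mem_Ici_of_Ioi hx, (ne_of_gt hx : x ≠ 0)⟩ ⟨mem_Ici_of_Ioi hy, (ne_of_gt hy : y ≠ 0)⟩ hxy
  simpa [slope_def_field, softThresholdMean_zero] using h

lemma concaveOn_thresholdRisk_sqrt [μ.IsNegInvariant] (hχ : 0 ≤ χ) (ha : a ∈ Icc (0 : ℝ) 1)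
    (hμ : MemLp id 2 μ) (hP : MonotoneOn (exceedanceProb μ χ) (Ici 0)) :
    ConcaveOn ℝ (Ici 0) (fun t => thresholdRisk μ a χ (√t)) := by
  have hder := hasDerivAt_thresholdRisk (a := a) hχ hμ
  have hderSqrt : ∀ t, 0 < t → HasDerivAt (fun t => thresholdRisk μ a χ (√t))
      (1 - a * exceedanceProb μ χ √t - a * (1 - a) * (softThresholdMean μ χ √t / √t)) t := by
    intro t ht
    have hs : √t ≠ 0 := (Real.sqrt_pos.2 ht).ne'
    refine ((hder √t).comp t (Real.hasDerivAt_sqrt ht.ne')).congr_deriv ?_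
    field_simp
  have hcont : Continuous (thresholdRisk μ a χ) :=
    continuous_iff_continuousAt.2 fun x => (hder x).continuousAt
  refine AntitoneOn.concaveOn_of_deriv (convex_Ici 0)
    (hcont.comp Real.continuous_sqrt).continuousOn
    (fun t ht => (hderSqrt t (by rwa [interior_Ici] at ht)).differentiableAt
      |>.differentiableWithinAt) fun s hs t ht hst => ?_
  rw [interior_Ici] at hs ht
  rw [(hderSqrt s hs).deriv, (hderSqrt t ht).deriv]
  have hsqrt := Real.sqrt_le_sqrt hst
  have hP' := hP (Real.sqrt_nonneg s) (Real.sqrt_nonneg t) hsqrt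
  have hm := monotoneOn_softThresholdMean_div hχ (hμ.integrable one_le_two) hP
    (Real.sqrt_pos.2 hs) (Real.sqrt_pos.2 ht) hsqrt
  have ha' : 0 ≤ a * (1 - a) := mul_nonneg ha.1 (sub_nonneg.2 ha.2)
  nlinarith [mul_le_mul_of_nonneg_left hP' ha.1, mul_le_mul_of_nonneg_left hm ha']

end Concavity

lemma isGreatest_add_of_concaveOn_sqrt {f : ℝ → ℝ} (heven : ∀ x, f (-x) = f x)
    (hconc : ConcaveOn ℝ (Ici 0) (fun t => f √t)) (c : ℝ) :
    IsGreatest {r | ∃ x y : ℝ, x ^ 2 + y ^ 2 = c ^ 2 ∧ r = f x + f y} (2 * f (c / √2)) := by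
  have hf_sqrt : ∀ x, f √(x ^ 2) = f x := fun x => by
    rw [Real.sqrt_sq_eq_abs]
    rcases abs_choice x with h | h <;> rw [h]
    exact heven x
  have hsq : (c / √2) ^ 2 = c ^ 2 / 2 := by rw [div_pow, Real.sq_sqrt zero_le_two]
  refine ⟨⟨c / √2, c / √2, by rw [hsq]; ring, by ring⟩, ?_⟩
  rintro r ⟨x, y, hxy, rfl⟩
  have h := hconc.2 (sq_nonneg x) (sq_nonneg y) (by norm_num : (0 : ℝ) ≤ 1 / 2)
    (by norm_num : (0 : ℝ) ≤ 1 / 2) (by norm_num)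
  simp only [smul_eq_mul, hf_sqrt] at h
  rw [show 1 / 2 * x ^ 2 + 1 / 2 * y ^ 2 = (c / √2) ^ 2 by rw [hsq, ← hxy]; ring, hf_sqrt] at h
  linarith

lemma gaussianPDFReal_le_of_abs_le (v : ℝ≥0) {x y : ℝ} (h : |x| ≤ |y|) :
    gaussianPDFReal 0 v y ≤ gaussianPDFReal 0 v x := by
  have : x ^ 2 ≤ y ^ 2 := sq_le_sq.2 h
  simp only [gaussianPDFReal, sub_zero]
  gcongr

lemma antitoneOn_intervalIntegral_window {f : ℝ → ℝ} (hf : Continuous f)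
    (hf_abs : ∀ x y, |x| ≤ |y| → f y ≤ f x) {χ : ℝ} (hχ : 0 ≤ χ) :
    AntitoneOn (fun t => ∫ x in (-χ - t)..(χ - t), f x) (Ici 0) := by
  have hF : ∀ t, ∫ x in (-χ - t)..(χ - t), f x =
      (∫ x in 0..(χ - t), f x) - ∫ x in 0..(-χ - t), f x :=
    fun t => (intervalIntegral.integral_interval_sub_left (hf.intervalIntegrable _ _)
      (hf.intervalIntegrable _ _)).symm
  have hder : ∀ t, HasDerivAt (fun t => ∫ x in (-χ - t)..(χ - t), f x)
      (f (-χ - t) - f (χ - t)) t := by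
    intro t
    simp only [hF]
    have h₁ := (hf.integral_hasStrictDerivAt 0 (χ - t)).hasDerivAt.comp t
      ((hasDerivAt_id t).const_sub χ)
    have h₂ := (hf.integral_hasStrictDerivAt 0 (-χ - t)).hasDerivAt.comp t
      ((hasDerivAt_id t).const_sub (-χ))
    exact (h₁.sub h₂).congr_deriv (by ring)
  refine antitoneOn_of_deriv_nonpos (convex_Ici 0)
    (fun t _ => (hder t).continuousAt.continuousWithinAt)
    (fun t _ => (hder t).differentiableAt.differentiableWithinAt) fun t ht => ?_
  rw [interior_Ici, mem_Ioi] at ht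
  rw [(hder t).deriv, sub_nonpos]
  exact hf_abs _ _ (by rw [abs_le]; constructor <;> cases abs_cases (-χ - t) <;> linarith)

lemma gaussianReal_apply_Icc {μ : ℝ} {v : ℝ≥0} (hv : v ≠ 0) {p q : ℝ} (hpq : p ≤ q) :
    gaussianReal μ v (Icc p q) = ENNReal.ofReal (∫ x in p..q, gaussianPDFReal μ v x) := by
  have := nullSingletonClass_gaussianReal (μ := μ) hv
  rw [gaussianReal_apply_eq_integral μ hv, integral_Icc_eq_integral_Ioc,
    intervalIntegral.integral_of_le hpq]

lemma monotoneOn_gaussianReal_exceedance {v : ℝ≥0} (hv : v ≠ 0) {χ : ℝ} (hχ : 0 ≤ χ) :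
    MonotoneOn (fun u => gaussianReal 0 v {w | χ < |u + w|}) (Ici 0) := by
  have hcompl : ∀ u, {w : ℝ | χ < |u + w|} = (Icc (-χ - u) (χ - u))ᶜ := fun u => by
    ext w
    simp only [mem_ofPred_eq, mem_compl_iff, mem_Icc, lt_abs, not_and_or, not_le]
    constructor <;> rintro (h | h) <;> first | (left; linarith) | (right; linarith)
  intro u hu u' hu' huu'
  simp only [hcompl, measure_compl measurableSet_Icc (measure_ne_top (gaussianReal 0 v) _)]
  refine tsub_le_tsub_left ?_ _
  rw [gaussianReal_apply_Icc hv (by linarith), gaussianReal_apply_Icc hv (by linarith)]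
  exact ENNReal.ofReal_le_ofReal (antitoneOn_intervalIntegral_window
    (by unfold gaussianPDFReal; fun_prop) (fun x y => gaussianPDFReal_le_of_abs_le v) hχ
    hu hu' huu')

lemma lintegral_sq_gaussianReal (v : ℝ≥0) :
    ∫⁻ x, ENNReal.ofReal (x ^ 2) ∂gaussianReal 0 v = v := by
  have hsq : Integrable (fun x => x ^ 2) (gaussianReal 0 v) :=
    (memLp_id_gaussianReal (μ := 0) (v := v) 2).integrable_sq
  rw [← ofReal_integral_eq_lintegral_ofReal hsq (ae_of_all _ fun x => sq_nonneg x),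
    ← variance_of_integral_eq_zero aemeasurable_id' integral_id_gaussianReal,
    variance_fun_id_gaussianReal, ENNReal.ofReal_coe_nnreal]

instance (v : ℝ≥0) : (gaussianReal 0 v).IsNegInvariant :=
  ⟨by simpa [Measure.neg_def] using gaussianReal_map_neg (μ := 0) (v := v)⟩

section Mixture

variable (ν : Measure ℝ≥0)

lemma measurable_gaussianReal_zero : Measurable fun v : ℝ≥0 => gaussianReal 0 v :=
  measurable_gaussianReal.comp (measurable_const.prodMk measurable_id)

instance [IsProbabilityMeasure ν] : IsProbabilityMeasure (mixtureLaw ν) :=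
  isProbabilityMeasure_bind measurable_gaussianReal_zero.aemeasurable
    (ae_of_all _ fun _ => inferInstance)

instance : (mixtureLaw ν).IsNegInvariant := by
  refine ⟨Measure.ext fun A hA => ?_⟩
  rw [Measure.neg_apply, mixtureLaw,
    Measure.bind_apply hA.neg measurable_gaussianReal_zero.aemeasurable,
    Measure.bind_apply hA measurable_gaussianReal_zero.aemeasurable]
  congr 1 with v
  rw [← Measure.neg_apply, Measure.IsNegInvariant.neg_eq_self]

variable {ν}

lemma nullSingletonClass_mixtureLaw (hν0 : ν {0} = 0) : NullSingletonClass (mixtureLaw ν) := by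
  refine ⟨fun x => ?_⟩
  rw [mixtureLaw, Measure.bind_apply (measurableSet_singleton x)
    measurable_gaussianReal_zero.aemeasurable, ← lintegral_zero]
  refine lintegral_congr_ae ((measure_eq_zero_iff_ae_notMem.1 hν0).mono fun v hv => ?_)
  have := nullSingletonClass_gaussianReal (μ := 0) hv
  exact measure_singleton x

lemma memLp_id_mixtureLaw (hν : ∫⁻ v, (v : ℝ≥0∞) ∂ν < ⊤) : MemLp id 2 (mixtureLaw ν) := by
  refine (memLp_two_iff_integrable_sq aestronglyMeasurable_id).2
    ⟨by fun_prop, (hasFiniteIntegral_iff_ofReal (ae_of_all _ fun x => sq_nonneg x)).2 ?_⟩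
  rw [mixtureLaw, Measure.lintegral_bind measurable_gaussianReal_zero.aemeasurable (by fun_prop)]
  simpa only [id, lintegral_sq_gaussianReal] using hν

lemma monotoneOn_exceedanceProb_mixtureLaw [IsProbabilityMeasure ν] (hν0 : ν {0} = 0) {χ : ℝ}
    (hχ : 0 ≤ χ) : MonotoneOn (exceedanceProb (mixtureLaw ν) χ) (Ici 0) := by
  intro u hu u' hu' huu'
  refine ENNReal.toReal_mono (measure_ne_top _ _) ?_
  rw [mixtureLaw, Measure.bind_apply (measurableSet_exceedance χ u)
    measurable_gaussianReal_zero.aemeasurable, Measure.bind_apply (measurableSet_exceedance χ u')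
    measurable_gaussianReal_zero.aemeasurable]
  exact lintegral_mono_ae ((measure_eq_zero_iff_ae_notMem.1 hν0).mono fun v hv =>
    monotoneOn_gaussianReal_exceedance hv hχ hu hu' huu')

end Mixture

lemma gRisk_eq_thresholdRisk (ν : Measure ℝ≥0) (χ₁ χ₂ : ℝ) :
    gRisk ν χ₁ χ₂ = thresholdRisk (mixtureLaw ν) (1 / (1 + χ₂)) χ₁ := rfl

/-- **Lemma 19.** Let `ω` be a centered Gaussian mixture, i.e. `ω | θ ~ N(0, σ_θ²)` with
`σ_θ > 0` a.s. and `E σ_θ² < ∞` (encoded via the variance law `ν`, a probability measure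
with `ν{0} = 0` and finite mean). For `χ₁ > 0`, `χ₂ ≥ 0`:
(i) `u ↦ g(u; χ₁, χ₂)` is even and nondecreasing on `[0, ∞)`;
(ii) for every `c > 0`, the maximum of `g(x) + g(y)` over `x² + y² = c²` equals
`2 g(c/√2)`. -/
theorem soft_threshold_mixture_risk_properties
    (ν : Measure ℝ≥0) [IsProbabilityMeasure ν] (hν0 : ν {0} = 0)
    (hνmean : ∫⁻ s, (s : ℝ≥0∞) ∂ν < ⊤)
    (χ₁ χ₂ : ℝ) (hχ₁ : 0 < χ₁) (hχ₂ : 0 ≤ χ₂) :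
    (∀ u : ℝ, gRisk ν χ₁ χ₂ (-u) = gRisk ν χ₁ χ₂ u) ∧
    (∀ u v : ℝ, 0 ≤ u → u ≤ v → gRisk ν χ₁ χ₂ u ≤ gRisk ν χ₁ χ₂ v) ∧
    (∀ c : ℝ, 0 < c →
      IsGreatest {r : ℝ | ∃ x y : ℝ, x ^ 2 + y ^ 2 = c ^ 2 ∧
          r = gRisk ν χ₁ χ₂ x + gRisk ν χ₁ χ₂ y}
        (2 * gRisk ν χ₁ χ₂ (c / Real.sqrt 2))) := by
  have := nullSingletonClass_mixtureLaw hν0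
  have hμ := memLp_id_mixtureLaw hνmean
  have ha : 1 / (1 + χ₂) ∈ Icc (0 : ℝ) 1 :=
    ⟨by positivity, (div_le_one (by linarith)).2 (by linarith)⟩
  rw [gRisk_eq_thresholdRisk]
  refine ⟨thresholdRisk_neg _ _, fun u v hu huv =>
    monotoneOn_thresholdRisk hχ₁.le ha hμ hu (hu.trans huv) huv, fun c _ => ?_⟩
  exact isGreatest_add_of_concaveOn_sqrt (thresholdRisk_neg _ _)
    (concaveOn_thresholdRisk_sqrt hχ₁.le ha hμ
      (monotoneOn_exceedanceProb_mixtureLaw hν0 hχ₁.le)) c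
end
end
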